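/- Let q be a power of 2 and k ≥ 1 an integer. Then A(2k, k, k-1) = q^k · A(2k, k, k); that is, over a finite field of even characteristic the number of [2k,k] codes with hull dimension k-1 is exactly q^k times the number of self-dual [2k,k] codes. -/

import Mathlib

/-- The (Euclidean) dual of a linear code `C ⊆ F^n`:
all vectors `y` with `∑ i, x i * y i = 0` for every `x ∈ C`. -/
def dualCode {F : Type*} [Field F] {n : ℕ} (C : Submodule F (Fin n → F)) :
    Submodule F (Fin n → F) where
  carrier := {y | ∀ x ∈ C, ∑ i, x i * y i = 0}
  zero_mem' := by intro x hx; simp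
  add_mem' := by
    intro a b ha hb x hx
    simp only [Set.mem_setOf_eq] at ha hb
    simp [Pi.add_apply, mul_add, Finset.sum_add_distrib, ha x hx, hb x hx]
  smul_mem' := by
    intro c a ha x hx
    simp only [Set.mem_setOf_eq] at ha
    simp [Pi.smul_apply, smul_eq_mul, mul_left_comm, ← Finset.mul_sum, ha x hx]

/-- The dimension of the hull `C ∩ C⊥` of a linear code. -/
noncomputable def hullDim {F : Type*} [Field F] {n : ℕ} (C : Submodule F (Fin n → F)) : ℕ :=
  Module.finrank F ↥(C ⊓ dualCode C)

/-- `numCodes F n k ℓ` is the number of `k`-dimensional linear codes in `F^n`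
whose hull has dimension `ℓ`. -/
noncomputable def numCodes (F : Type*) [Field F] (n k ℓ : ℕ) : ℕ :=
  Nat.card {C : Submodule F (Fin n → F) // Module.finrank F ↥C = k ∧ hullDim C = ℓ}

/-!
Write `𝟙` for the all-ones vector. In characteristic 2, `x ⬝ᵥ x = (x ⬝ᵥ 𝟙)²`, so every vector of a
hull is orthogonal to `𝟙`, and `𝟙 ⬝ᵥ 𝟙 = 2k = 0`. Fix `c` with `c ⬝ᵥ 𝟙 = 1`, hence `c ⬝ᵥ c = 1`.
Then `C ↦ hull C ⊔ ⟨𝟙⟩` and `D ↦ (D ∩ c⊥) ⊔ ⟨c⟩` are inverse bijections between the `[2k, k]` codes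
with `(k-1)`-dimensional hull that contain `c` and the self-dual `[2k, k]` codes; on both sides
`hull C = C ∩ c⊥ = D ∩ c⊥`. A code whose hull has codimension one contains `q^(k-1)` vectors `c`
with `c ⬝ᵥ 𝟙 = 1`, and `F^(2k)` contains `q^(2k-1)` of them, so double counting the pairs `(C, c)`
gives `A(2k, k, k-1) · q^(k-1) = q^(2k-1) · A(2k, k, k)`.
-/

open Module Submodule LinearMap

section Generic

variable {K V : Type*} [Field K] [AddCommGroup V] [Module K V]

lemma inf_ker_sup_span_singleton {W : Submodule K V} {f : V →ₗ[K] K} {u : V}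
    (hu : u ∈ W) (hfu : f u ≠ 0) : W ⊓ ker f ⊔ span K {u} = W := by
  rw [inf_sup_assoc_of_le _ (span_singleton_le_iff_mem u W |>.mpr hu), sup_comm,
    span_singleton_sup_ker_eq_top f hfu, inf_top_eq]

lemma sup_span_singleton_inf_ker {H : Submodule K V} {f : V →ₗ[K] K} {u : V}
    (hH : H ≤ ker f) (hfu : f u ≠ 0) : (H ⊔ span K {u}) ⊓ ker f = H := by
  rw [sup_inf_assoc_of_le _ hH, inf_comm,
    disjoint_iff.mp (disjoint_span_singleton_of_notMem (x := u) hfu), sup_bot_eq]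

variable [FiniteDimensional K V]

lemma finrank_inf_ker_add_one {W : Submodule K V} {f : V →ₗ[K] K} {u : V}
    (hu : u ∈ W) (hfu : f u ≠ 0) : finrank K (W ⊓ ker f : Submodule K V) + 1 = finrank K W := by
  conv_rhs => rw [← inf_ker_sup_span_singleton hu hfu]
  rw [finrank_sup_span_singleton fun h => hfu (mem_inf.mp h).2]

lemma card_apply_eq_one_and_mem [Fintype K] {W : Submodule K V} {f : V →ₗ[K] K} {w : V}
    (hw : w ∈ W) (hfw : f w = 1) :
    Nat.card {x // f x = 1 ∧ x ∈ W} = Fintype.card K ^ (finrank K W - 1) := by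
  have e : {x // f x = 1 ∧ x ∈ W} ≃ (W ⊓ ker f : Submodule K V) :=
    (Equiv.subRight w).subtypeEquiv fun x => by
      simp [mem_ker, sub_mem_iff_left _ hw, hfw, sub_eq_zero, and_comm]
  rw [Nat.card_congr e, Module.natCard_eq_pow_finrank (K := K), Nat.card_eq_fintype_card,
    ← finrank_inf_ker_add_one hw (hfw ▸ one_ne_zero), Nat.add_sub_cancel]

end Generic

lemma card_mul_eq_card_mul_of_fibers {α β : Type*} [Finite α] [Finite β] (r : α → β → Prop)
    {m n : ℕ} (hm : ∀ a, Nat.card {b // r a b} = m) (hn : ∀ b, Nat.card {a // r a b} = n) :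
    Nat.card α * m = Nat.card β * n := by
  classical
  have := Fintype.ofFinite α
  have := Fintype.ofFinite β
  simp only [Nat.card_eq_fintype_card, Fintype.card_subtype] at hm hn ⊢
  exact Finset.card_mul_eq_card_mul r (fun a _ => hm a) (fun b _ => hn b)

section Dual

variable {F : Type*} [Field F] {n : ℕ}

def hull (C : Submodule F (Fin n → F)) : Submodule F (Fin n → F) := C ⊓ dualCode C

lemma hullDim_eq_finrank_hull (C : Submodule F (Fin n → F)) : hullDim C = finrank F (hull C) :=
  rfl

lemma mem_dualCode {C : Submodule F (Fin n → F)} {y : Fin n → F} :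
    y ∈ dualCode C ↔ ∀ x ∈ C, x ⬝ᵥ y = 0 := Iff.rfl

lemma dualCode_antitone : Antitone (dualCode : Submodule F (Fin n → F) → _) :=
  fun _ _ h _ hy x hx => hy x (h hx)

lemma le_dualCode_comm {A B : Submodule F (Fin n → F)} : A ≤ dualCode B ↔ B ≤ dualCode A := by
  constructor <;> exact fun h x hx y hy => (dotProduct_comm y x).trans (h hy x hx)

lemma hull_le_dualCode_hull (C : Submodule F (Fin n → F)) : hull C ≤ dualCode (hull C) :=
  inf_le_right.trans (dualCode_antitone inf_le_left)

lemma hull_le_ker {C : Submodule F (Fin n → F)} {c : Fin n → F} (hc : c ∈ C) :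
    hull C ≤ ker (dotProductBilin F F c) :=
  fun _ hx => hx.2 c hc

lemma finrank_dualCode (C : Submodule F (Fin n → F)) :
    finrank F (dualCode C) = n - finrank F C := by
  have hB : (dotProductBilin F F : LinearMap.BilinForm F (Fin n → F)).Nondegenerate :=
    (IsRefl.nondegenerate_iff_separatingLeft fun x y h => (dotProduct_comm y x).trans h).mpr
      fun x hx => dotProduct_eq_zero x hx
  have := LinearMap.BilinForm.finrank_orthogonal hB C
  rwa [Module.finrank_fin_fun] at this

lemma dualCode_eq_self_of_le {C : Submodule F (Fin n → F)} (hC : C ≤ dualCode C)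
    (hn : n = 2 * finrank F C) : dualCode C = C :=
  (eq_of_le_of_finrank_eq hC (by rw [finrank_dualCode]; omega)).symm

lemma sup_span_singleton_le_dualCode {W : Submodule F (Fin n → F)} {v : Fin n → F}
    (hW : W ≤ dualCode W) (hv : v ∈ dualCode W) (hvv : v ⬝ᵥ v = 0) :
    W ⊔ span F {v} ≤ dualCode (W ⊔ span F {v}) := by
  have hvW : span F {v} ≤ dualCode W := (span_singleton_le_iff_mem v _).mpr hv
  have hvv' : span F {v} ≤ dualCode (span F {v}) := by
    rw [span_singleton_le_iff_mem, mem_dualCode]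
    intro x hx
    obtain ⟨t, rfl⟩ := mem_span_singleton.mp hx
    rw [smul_dotProduct, hvv, smul_zero]
  refine sup_le (le_dualCode_comm.mp (sup_le hW hvW)) (le_dualCode_comm.mp (sup_le ?_ hvv'))
  exact le_dualCode_comm.mp hvW

lemma card_dotProduct_one_eq_one [Fintype F] (hn : 0 < n) :
    Nat.card {x : Fin n → F // x ⬝ᵥ 1 = 1} = Fintype.card F ^ (n - 1) := by
  have hw : (dotProductBilin F F).flip (1 : Fin n → F) (Pi.single ⟨0, hn⟩ 1) = 1 := by simp
  have := card_apply_eq_one_and_mem (mem_top (R := F)) hw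
  rw [finrank_top, Module.finrank_fin_fun] at this
  exact (Nat.card_congr (Equiv.subtypeEquivRight fun x => (and_iff_left mem_top).symm)).trans this

lemma hull_sup_span_one_inf_ker {C : Submodule F (Fin n → F)} {c : Fin n → F} (hc : c ∈ C)
    (hc1 : c ⬝ᵥ 1 ≠ 0) : (hull C ⊔ span F {1}) ⊓ ker (dotProductBilin F F c) = hull C :=
  sup_span_singleton_inf_ker (hull_le_ker hc) hc1

variable {k : ℕ}

lemma finrank_eq_of_dualCode_eq_self {D : Submodule F (Fin (2 * k) → F)}
    (hD : dualCode D = D) : finrank F D = k := by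
  have := finrank_dualCode D
  rw [hD] at this
  omega

lemma finrank_eq_and_hullDim_eq_iff {D : Submodule F (Fin (2 * k) → F)} :
    finrank F D = k ∧ hullDim D = k ↔ dualCode D = D := by
  refine ⟨fun ⟨hD, hH⟩ => dualCode_eq_self_of_le ?_ (by omega), fun hD => ?_⟩
  · have : hull D = D := eq_of_le_of_finrank_eq inf_le_left (hH.trans hD.symm)
    exact this.ge.trans inf_le_right
  · have := finrank_eq_of_dualCode_eq_self hD
    refine ⟨this, ?_⟩
    rw [hullDim, hD, inf_idem, this]

end Dual

section CharTwo

variable {F : Type*} [Field F] [CharP F 2] {n k : ℕ}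

lemma dotProduct_self_eq_sq (x : Fin n → F) : x ⬝ᵥ x = (x ⬝ᵥ 1) ^ 2 := by
  rw [dotProduct_one, sq, CharTwo.sum_mul_self]
  rfl

lemma dotProduct_one_eq_zero_of_mem_hull {C : Submodule F (Fin n → F)} {x : Fin n → F}
    (hx : x ∈ hull C) : x ⬝ᵥ 1 = 0 :=
  pow_eq_zero_iff two_ne_zero |>.mp ((dotProduct_self_eq_sq x).symm.trans (hx.2 x hx.1))

lemma one_mem_dualCode_hull (C : Submodule F (Fin n → F)) : (1 : Fin n → F) ∈ dualCode (hull C) :=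
  fun _ hx => dotProduct_one_eq_zero_of_mem_hull hx

lemma one_dotProduct_one_eq_zero : (1 : Fin (2 * k) → F) ⬝ᵥ 1 = 0 := by
  rw [one_dotProduct_one, Fintype.card_fin, Nat.cast_mul, Nat.cast_two, CharTwo.two_eq_zero,
    zero_mul]

lemma exists_dotProduct_one_eq_one {C : Submodule F (Fin n → F)}
    (hC : finrank F C = hullDim C + 1) : ∃ c ∈ C, c ⬝ᵥ 1 = 1 := by
  suffices ∃ c ∈ C, c ⬝ᵥ 1 ≠ 0 by
    obtain ⟨c, hc, hc1⟩ := this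
    refine ⟨(c ⬝ᵥ 1)⁻¹ • c, C.smul_mem _ hc, ?_⟩
    rw [smul_dotProduct, smul_eq_mul, inv_mul_cancel₀ hc1]
  by_contra! horth
  obtain ⟨c, hc, hcH⟩ := SetLike.exists_of_lt <|
    (inf_le_left : hull C ≤ C).lt_of_ne fun h => by
      rw [hullDim_eq_finrank_hull, show hull C = C from h] at hC; omega
  -- the dot product is alternating on `C`, so `C = hull C ⊔ span {c}` is self-orthogonal
  have hCc : hull C ⊔ span F {c} = C :=
    eq_of_le_of_finrank_eq (sup_le inf_le_left ((span_singleton_le_iff_mem c C).mpr hc))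
      (by rw [finrank_sup_span_singleton (p := hull C) hcH, hC, hullDim_eq_finrank_hull])
  have hself : C ≤ dualCode C := hCc ▸ sup_span_singleton_le_dualCode (hull_le_dualCode_hull C)
    (le_dualCode_comm.mp inf_le_right hc) (by rw [dotProduct_self_eq_sq, horth c hc, sq, zero_mul])
  rw [hullDim_eq_finrank_hull, show hull C = C from inf_eq_left.mpr hself] at hC
  omega

lemma card_dotProduct_one_eq_one_and_mem [Fintype F] {C : Submodule F (Fin n → F)}
    (hC : finrank F C = hullDim C + 1) :
    Nat.card {x : Fin n → F // x ⬝ᵥ 1 = 1 ∧ x ∈ C} = Fintype.card F ^ (finrank F C - 1) := by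
  obtain ⟨c, hc, hc1⟩ := exists_dotProduct_one_eq_one hC
  exact card_apply_eq_one_and_mem (f := (dotProductBilin F F).flip 1) hc hc1

lemma dotProduct_self_eq_one {c : Fin n → F} (hc1 : c ⬝ᵥ 1 = 1) : c ⬝ᵥ c = 1 := by
  rw [dotProduct_self_eq_sq, hc1, one_pow]

lemma hull_eq_inf_ker {C : Submodule F (Fin n → F)} {c : Fin n → F}
    (hC : finrank F C = hullDim C + 1) (hc : c ∈ C) (hc1 : c ⬝ᵥ 1 = 1) :
    hull C = C ⊓ ker (dotProductBilin F F c) := by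
  refine eq_of_le_of_finrank_eq (le_inf inf_le_left (hull_le_ker hc)) ?_
  have := finrank_inf_ker_add_one (f := dotProductBilin F F c) hc
    (by simp [dotProduct_self_eq_one hc1])
  rw [hullDim_eq_finrank_hull] at hC
  omega

lemma one_mem_of_dualCode_eq_self {D : Submodule F (Fin n → F)} (hD : dualCode D = D) :
    (1 : Fin n → F) ∈ D := by
  have := one_mem_dualCode_hull D
  rwa [hull, hD, inf_idem, hD] at this

lemma hull_inf_ker_sup_span {D : Submodule F (Fin n → F)} {c : Fin n → F} (hD : dualCode D = D)
    (hc1 : c ⬝ᵥ 1 = 1) :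
    hull (D ⊓ ker (dotProductBilin F F c) ⊔ span F {c}) = D ⊓ ker (dotProductBilin F F c) := by
  set H := D ⊓ ker (dotProductBilin F F c)
  refine le_antisymm ?_ (le_inf le_sup_left (le_dualCode_comm.mpr (sup_le ?_ ?_)))
  · calc hull (H ⊔ span F {c})
        ≤ (H ⊔ span F {c}) ⊓ ker (dotProductBilin F F c) :=
          le_inf inf_le_left (hull_le_ker (mem_sup_right (mem_span_singleton_self c)))
      _ = H := sup_span_singleton_inf_ker inf_le_right (by simp [dotProduct_self_eq_one hc1])
  · exact (inf_le_left.trans hD.ge).trans (dualCode_antitone inf_le_left)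
  · exact (span_singleton_le_iff_mem _ _).mpr fun x hx => (dotProduct_comm x c).trans hx.2

variable {c : Fin (2 * k) → F}

lemma dualCode_hull_sup_span_one {C : Submodule F (Fin (2 * k) → F)} (hH : hullDim C + 1 = k)
    (hc : c ∈ C) (hc1 : c ⬝ᵥ 1 = 1) :
    dualCode (hull C ⊔ span F {1}) = hull C ⊔ span F {1} := by
  have h1 : (1 : Fin (2 * k) → F) ∉ hull C := fun h => by simpa [hc1] using hull_le_ker hc h
  refine dualCode_eq_self_of_le (sup_span_singleton_le_dualCode (hull_le_dualCode_hull C)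
    (one_mem_dualCode_hull C) one_dotProduct_one_eq_zero) ?_
  rw [finrank_sup_span_singleton h1, ← hullDim_eq_finrank_hull]
  omega

lemma finrank_and_hullDim_inf_ker_sup_span {D : Submodule F (Fin (2 * k) → F)}
    (hD : dualCode D = D) (hc1 : c ⬝ᵥ 1 = 1) :
    finrank F (D ⊓ ker (dotProductBilin F F c) ⊔ span F {c} : Submodule F _) = k ∧
      hullDim (D ⊓ ker (dotProductBilin F F c) ⊔ span F {c}) + 1 = k := by
  have hcc : dotProductBilin F F c c ≠ 0 := by simp [dotProduct_self_eq_one hc1]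
  have hH := finrank_inf_ker_add_one (f := dotProductBilin F F c)
    (one_mem_of_dualCode_eq_self hD) (by simp [hc1])
  rw [finrank_eq_of_dualCode_eq_self hD] at hH
  rw [hullDim_eq_finrank_hull, hull_inf_ker_sup_span hD hc1,
    finrank_sup_span_singleton fun h => hcc (mem_inf.mp h).2]
  exact ⟨hH, hH⟩

def codesThroughEquivSelfDual (hc1 : c ⬝ᵥ 1 = 1) :
    {C : Submodule F (Fin (2 * k) → F) // (finrank F C = k ∧ hullDim C + 1 = k) ∧ c ∈ C} ≃
      {D : Submodule F (Fin (2 * k) → F) // dualCode D = D} where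
  toFun C := ⟨hull C.1 ⊔ span F {1}, dualCode_hull_sup_span_one C.2.1.2 C.2.2 hc1⟩
  invFun D := ⟨D.1 ⊓ ker (dotProductBilin F F c) ⊔ span F {c},
    finrank_and_hullDim_inf_ker_sup_span D.2 hc1, mem_sup_right (mem_span_singleton_self c)⟩
  left_inv C := Subtype.ext <| by
    dsimp only
    rw [hull_sup_span_one_inf_ker C.2.2 (hc1 ▸ one_ne_zero),
      hull_eq_inf_ker (C.2.1.1.trans C.2.1.2.symm) C.2.2 hc1,
      inf_ker_sup_span_singleton C.2.2 (by simp [dotProduct_self_eq_one hc1])]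
  right_inv D := Subtype.ext <| by
    dsimp only
    rw [hull_inf_ker_sup_span D.2 hc1,
      inf_ker_sup_span_singleton (one_mem_of_dualCode_eq_self D.2) (by simp [hc1])]

lemma card_codes_containing_eq_numCodes (hc1 : c ⬝ᵥ 1 = 1) :
    Nat.card {C : {C : Submodule F (Fin (2 * k) → F) // finrank F C = k ∧ hullDim C + 1 = k} //
      c ∈ C.1} = numCodes F (2 * k) k k :=
  Nat.card_congr <| (Equiv.subtypeSubtypeEquivSubtypeInter _ (c ∈ ·)).trans <|
    (codesThroughEquivSelfDual hc1).trans <|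
      Equiv.subtypeEquivRight fun _ => finrank_eq_and_hullDim_eq_iff.symm

end CharTwo

theorem stmt11_general (F : Type*) [Field F] [Fintype F] (q k : ℕ)
    (hq : Fintype.card F = q) (hq2 : ∃ m : ℕ, q = 2 ^ m) :
    numCodes F (2 * k) k (k - 1) = q ^ k * numCodes F (2 * k) k k := by
  obtain rfl | hk := k.eq_zero_or_pos
  · simp
  obtain ⟨m, hm⟩ := hq2
  have : CharP F 2 := charP_of_card_eq_prime_pow (hq.trans hm)
  subst hq
  have hcount := card_mul_eq_card_mul_of_fibers
    (α := {C : Submodule F (Fin (2 * k) → F) // finrank F C = k ∧ hullDim C + 1 = k})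
    (fun C (c : {c : Fin (2 * k) → F // c ⬝ᵥ 1 = 1}) => c.1 ∈ C.1)
    (fun C => by
      rw [Nat.card_congr (Equiv.subtypeSubtypeEquivSubtypeInter _ _),
        card_dotProduct_one_eq_one_and_mem (C.2.1.trans C.2.2.symm), C.2.1])
    (fun c => card_codes_containing_eq_numCodes c.2)
  have hα : Nat.card {C : Submodule F (Fin (2 * k) → F) // finrank F C = k ∧ hullDim C + 1 = k} =
      numCodes F (2 * k) k (k - 1) :=
    Nat.card_congr (Equiv.subtypeEquivRight fun _ => and_congr_right' (by omega))
  rw [hα, card_dotProduct_one_eq_one (by omega), show 2 * k - 1 = k + (k - 1) by omega, pow_add,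
    mul_right_comm] at hcount
  exact Nat.eq_of_mul_eq_mul_right (pow_pos Fintype.card_pos _) hcount

theorem stmt11 (F : Type*) [Field F] [Fintype F] (q k : ℕ)
    (hq : Fintype.card F = q) (hq2 : ∃ m : ℕ, q = 2 ^ m) (hk : 1 ≤ k) :
    numCodes F (2 * k) k (k - 1) = q ^ k * numCodes F (2 * k) k k :=
  stmt11_general F q k hq hq2
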